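/- arXiv:2204.13305 — 2 statements merged into one kernel-verified Lean document; each statement's English description precedes it below -/
import Mathlib

section
/- For all i,j ∈ {1,2,3,4} with i ≠ j, the class ImageTrans_i is not a subclass of ImageTrans_j, i.e. there exists a CAF obtainable by Reduction i from a PCAF with transitive preferences that is not obtainable by Reduction j from any PCAF with transitive preferences. -/
/-- A claim-augmented argumentation framework (CAF): a finite set of arguments,
an attack relation between the arguments, and a claim function assigning
a claim to each argument.  Arguments and claims are drawn from `ℕ`. -/
structure CAF where
  args : Finset ℕ
  att : Set (ℕ × ℕ)
  claim : ℕ → ℕ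
  att_dom : ∀ p ∈ att, p.1 ∈ args ∧ p.2 ∈ args

namespace CAF

/-- A CAF is well-formed if arguments with the same claim attack the same arguments. -/
def wf (F : CAF) : Prop :=
  ∀ a ∈ F.args, ∀ b ∈ F.args, F.claim a = F.claim b →
    ∀ c, ((a, c) ∈ F.att ↔ (b, c) ∈ F.att)

/-- `S` attacks the argument `b` in `F`. -/
def attacks (F : CAF) (S : Set ℕ) (b : ℕ) : Prop := ∃ a ∈ S, (a, b) ∈ F.att

/-- The argument `a` is defended by `S` in `F`. -/
def defends (F : CAF) (S : Set ℕ) (a : ℕ) : Prop :=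
  ∀ b, (b, a) ∈ F.att → F.attacks S b

/-- The range `S⊕` of `S` in `F`. -/
def range (F : CAF) (S : Set ℕ) : Set ℕ := S ∪ {b | F.attacks S b}

/-- Conflict-free sets. -/
def cf (F : CAF) (S : Set ℕ) : Prop :=
  S ⊆ ↑F.args ∧ ∀ a ∈ S, ∀ b ∈ S, (a, b) ∉ F.att

/-- Admissible sets. -/
def adm (F : CAF) (S : Set ℕ) : Prop :=
  F.cf S ∧ ∀ a ∈ S, F.defends S a

/-- Complete extensions. -/
def com (F : CAF) (S : Set ℕ) : Prop :=
  F.adm S ∧ ∀ a ∈ F.args, F.defends S a → a ∈ S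

/-- Naive extensions: ⊆-maximal conflict-free sets. -/
def naive (F : CAF) (S : Set ℕ) : Prop :=
  F.cf S ∧ ¬ ∃ T, F.cf T ∧ S ⊂ T

/-- Stable extensions. -/
def stb (F : CAF) (S : Set ℕ) : Prop :=
  F.cf S ∧ ∀ a ∈ F.args, a ∉ S → F.attacks S a

/-- Preferred extensions: ⊆-maximal admissible sets. -/
def prf (F : CAF) (S : Set ℕ) : Prop :=
  F.adm S ∧ ¬ ∃ T, F.adm T ∧ S ⊂ T

/-- Semi-stable extensions: admissible sets with ⊆-maximal range among admissible sets. -/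
def sem (F : CAF) (S : Set ℕ) : Prop :=
  F.adm S ∧ ¬ ∃ T, F.adm T ∧ F.range S ⊂ F.range T

/-- Stage extensions: conflict-free sets with ⊆-maximal range among conflict-free sets. -/
def stg (F : CAF) (S : Set ℕ) : Prop :=
  F.cf S ∧ ¬ ∃ T, F.cf T ∧ F.range S ⊂ F.range T

/-- The claim-based variant `σ_c` of a semantics `σ`. -/
def claimSem (σ : CAF → Set ℕ → Prop) (F : CAF) : Set (Set ℕ) :=
  {C | ∃ S, σ F S ∧ F.claim '' S = C}

/-- The wf-problematic part of a CAF: the pairs of arguments `(a,b)` such that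
`(a,b)` is not an attack but some argument `a'` with the same claim as `a` attacks `b`. -/
def wfp (F : CAF) : Set (ℕ × ℕ) :=
  {p | p.1 ∈ F.args ∧ p.2 ∈ F.args ∧ p ∉ F.att ∧
       ∃ a' ∈ F.args, F.claim a' = F.claim p.1 ∧ (a', p.2) ∈ F.att}

end CAF

/-- A preference-based CAF (PCAF): a well-formed CAF together with an
asymmetric preference relation over its arguments. -/
structure PCAF extends CAF where
  pref : ℕ → ℕ → Prop
  pref_dom : ∀ a b, pref a b → a ∈ args ∧ b ∈ args
  pref_asymm : ∀ a b, pref a b → ¬ pref b a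
  isWf : toCAF.wf

/-- The attack relation obtained from a PCAF by Reduction `i` (`i ∈ {1,2,3,4}`). -/
def redAtt (i : ℕ) (F : PCAF) : Set (ℕ × ℕ) :=
  if i = 1 then {p | p ∈ F.att ∧ ¬ F.pref p.2 p.1}
  else if i = 2 then
    {p | (p ∈ F.att ∧ ¬ F.pref p.2 p.1) ∨
         ((p.2, p.1) ∈ F.att ∧ p ∉ F.att ∧ F.pref p.1 p.2)}
  else if i = 3 then
    {p | (p ∈ F.att ∧ ¬ F.pref p.2 p.1) ∨ (p ∈ F.att ∧ (p.2, p.1) ∉ F.att)}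
  else if i = 4 then
    {p | (p ∈ F.att ∧ ¬ F.pref p.2 p.1) ∨
         ((p.2, p.1) ∈ F.att ∧ p ∉ F.att ∧ F.pref p.1 p.2) ∨
         (p ∈ F.att ∧ (p.2, p.1) ∉ F.att)}
  else ∅

/-- The CAF `Red_i(F)` obtained from the PCAF `F` by Reduction `i`. -/
def Red (i : ℕ) (F : PCAF) : CAF where
  args := F.args
  att := redAtt i F
  claim := F.claim
  att_dom := by
    intro p hp
    unfold redAtt at hp
    split_ifs at hp
    · simp only [Set.mem_setOf_eq] at hp
      exact F.att_dom p hp.1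
    · simp only [Set.mem_setOf_eq] at hp
      rcases hp with ⟨h, -⟩ | ⟨h, -, -⟩
      · exact F.att_dom p h
      · exact ⟨(F.att_dom _ h).2, (F.att_dom _ h).1⟩
    · simp only [Set.mem_setOf_eq] at hp
      rcases hp with ⟨h, -⟩ | ⟨h, -⟩ <;> exact F.att_dom p h
    · simp only [Set.mem_setOf_eq] at hp
      rcases hp with ⟨h, -⟩ | ⟨h, -, -⟩ | ⟨h, -⟩
      · exact F.att_dom p h
      · exact ⟨(F.att_dom _ h).2, (F.att_dom _ h).1⟩
      · exact F.att_dom p h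
    · exact absurd hp (Set.notMem_empty p)

/-- `Image_i`: the class of CAFs obtainable by applying Reduction `i` to a PCAF. -/
def ImageI (i : ℕ) : Set CAF := {F | ∃ G : PCAF, Red i G = F}

/-- `ImageTrans_i`: the class of CAFs obtainable by applying Reduction `i`
to a PCAF with a transitive preference relation. -/
def ImageTransI (i : ℕ) : Set CAF :=
  {F | ∃ G : PCAF, Transitive G.pref ∧ Red i G = F}

/-- The class of well-formed CAFs. -/
def wfCAFs : Set CAF := {F | F.wf}

/-- The preference-claim-based variant `σ_p^i` of a semantics `σ`. -/
def prefSem (σ : CAF → Set ℕ → Prop) (i : ℕ) (F : PCAF) : Set (Set ℕ) :=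
  CAF.claimSem σ (Red i F)

/-- `E_0(C)`: all arguments of `F` with a claim in `C`. -/
def E0 (F : PCAF) (C : Set ℕ) : Set ℕ := {a | a ∈ F.args ∧ F.claim a ∈ C}

/-- `E_1^i(C)`: the arguments of `E_0(C)` not attacked by `E_0(C)` in the
underlying AF of `F` (this set does not depend on `i`). -/
def E1 (F : PCAF) (C : Set ℕ) : Set ℕ :=
  E0 F C \ {b | ∃ a ∈ E0 F C, (a, b) ∈ F.att}

/-- The sequence `E_k^i(C)`. -/
def Ek (F : PCAF) (i : ℕ) (C : Set ℕ) : ℕ → Set ℕ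
  | 0 => E0 F C
  | 1 => E1 F C
  | (k + 2) => {x | x ∈ Ek F i C (k + 1) ∧ (Red i F).defends (Ek F i C (k + 1)) x}

/-- `E_*^i(C)`: the fixed point of the sequence `E_k^i(C)` (reached after at
most `|A|` steps, since the sequence is ⊆-decreasing from index 1 on). -/
def Estar (F : PCAF) (i : ℕ) (C : Set ℕ) : Set ℕ := Ek F i C (F.args.card + 2)

/-! Each reduction `Red_k` is singled out by a structural property that the images of the other
three reductions have and some `Red_k(F)` lacks. Let `a`, `b` have the same claim, so that by
well-formedness they attack the same arguments in the underlying PCAF.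
* `k ≠ 1`: a self-attacking `a` attacks or is attacked by `b`, since only reduction 1 can delete
  both directions of an attack.
* `k ≠ 2`: if `a` attacks `b`, then `b` attacks itself or `a`, since only reduction 2 reverses an
  attack without keeping it.
* `k ≠ 4`: if `a` and `b` attack each other, then `b` attacks itself, since only reduction 4 turns
  a one-directional attack into a mutual one.
* `k ≠ 3`: for transitive preferences, attacks `(a, a)`, `(b, c)`, `(c, a)` force one of
  `(b, a)`, `(a, c)`, `(c, b)`, since under the other reductions an attack on a preferred
  argument survives only if that argument retaliates. -/

theorem PCAF.not_pref_self (G : PCAF) (a : ℕ) : ¬ G.pref a a :=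
  fun h => G.pref_asymm a a h h

section Reductions

variable {G : PCAF} {a b : ℕ}

theorem mem_redAtt_one :
    (a, b) ∈ redAtt 1 G ↔ (a, b) ∈ G.att ∧ ¬ G.pref b a := by
  simp [redAtt]

theorem mem_redAtt_two :
    (a, b) ∈ redAtt 2 G ↔ ((a, b) ∈ G.att ∧ ¬ G.pref b a) ∨
      ((b, a) ∈ G.att ∧ (a, b) ∉ G.att ∧ G.pref a b) := by
  simp [redAtt]

theorem mem_redAtt_three :
    (a, b) ∈ redAtt 3 G ↔ ((a, b) ∈ G.att ∧ ¬ G.pref b a) ∨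
      ((a, b) ∈ G.att ∧ (b, a) ∉ G.att) := by
  simp [redAtt]

theorem mem_redAtt_four :
    (a, b) ∈ redAtt 4 G ↔ ((a, b) ∈ G.att ∧ ¬ G.pref b a) ∨
      ((b, a) ∈ G.att ∧ (a, b) ∉ G.att ∧ G.pref a b) ∨
      ((a, b) ∈ G.att ∧ (b, a) ∉ G.att) := by
  simp [redAtt]

theorem mem_att_or_reversed_of_mem_redAtt {i : ℕ} (h : (a, b) ∈ redAtt i G) :
    (a, b) ∈ G.att ∨ ((b, a) ∈ G.att ∧ G.pref a b) := by
  unfold redAtt at h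
  split_ifs at h <;> simp only [Set.mem_ofPred_eq, Set.mem_empty_iff_false] at h <;> tauto

theorem mem_redAtt_of_not_pref {i : ℕ} (hi : i = 1 ∨ i = 2 ∨ i = 3 ∨ i = 4)
    (h : (a, b) ∈ G.att) (hba : ¬ G.pref b a) : (a, b) ∈ redAtt i G := by
  rcases hi with rfl | rfl | rfl | rfl <;>
    simp only [mem_redAtt_one, mem_redAtt_two, mem_redAtt_three, mem_redAtt_four] <;> tauto

theorem mem_redAtt_or_swap_of_mem_att {i : ℕ} (hi : i = 2 ∨ i = 3 ∨ i = 4)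
    (h : (a, b) ∈ G.att) : (a, b) ∈ redAtt i G ∨ (b, a) ∈ redAtt i G := by
  have := G.pref_asymm b a
  rcases hi with rfl | rfl | rfl <;>
    simp only [mem_redAtt_two, mem_redAtt_three, mem_redAtt_four] <;> tauto

theorem swap_mem_redAtt_of_not_mem_att {i : ℕ} (hi : i = 1 ∨ i = 3 ∨ i = 4)
    (h : (a, b) ∈ redAtt i G) (hab : (a, b) ∉ G.att) : (b, a) ∈ redAtt i G := by
  rcases hi with rfl | rfl | rfl <;>
    simp only [mem_redAtt_one, mem_redAtt_three, mem_redAtt_four] at h ⊢ <;> tauto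

theorem mem_att_of_mem_redAtt_of_swap {i : ℕ} (hi : i = 1 ∨ i = 2 ∨ i = 3)
    (h : (a, b) ∈ redAtt i G) (h' : (b, a) ∈ redAtt i G) : (a, b) ∈ G.att := by
  rcases hi with rfl | rfl | rfl <;>
    simp only [mem_redAtt_one, mem_redAtt_two, mem_redAtt_three] at h h' <;> tauto

theorem swap_mem_redAtt_of_pref {i : ℕ} (hi : i = 1 ∨ i = 2 ∨ i = 4)
    (hba : G.pref b a) (hD : (a, b) ∈ redAtt i G) :
    (b, a) ∈ redAtt i G := by
  have := G.pref_asymm b a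
  rcases hi with rfl | rfl | rfl <;>
    simp only [mem_redAtt_one, mem_redAtt_two, mem_redAtt_four] at hD ⊢ <;> tauto

end Reductions

theorem imageTransI_subset_imageI (i : ℕ) : ImageTransI i ⊆ ImageI i :=
  fun _ ⟨G, _, hG⟩ => ⟨G, hG⟩

section Images

variable {j : ℕ} {F : CAF} {a b : ℕ}

theorem attack_between_of_self_attack_of_mem_imageI (hj : j = 2 ∨ j = 3 ∨ j = 4)
    (hF : F ∈ ImageI j) (ha : a ∈ F.args) (hb : b ∈ F.args) (hab : F.claim a = F.claim b)
    (haa : (a, a) ∈ F.att) : (b, a) ∈ F.att ∨ (a, b) ∈ F.att := by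
  obtain ⟨G, rfl⟩ := hF
  have haaG : (a, a) ∈ G.att := by
    rcases mem_att_or_reversed_of_mem_redAtt haa with h | ⟨h, -⟩ <;> exact h
  exact mem_redAtt_or_swap_of_mem_att hj ((G.isWf a ha b hb hab a).mp haaG)

theorem self_attack_or_swap_of_attack_of_mem_imageI (hj : j = 1 ∨ j = 3 ∨ j = 4)
    (hF : F ∈ ImageI j) (ha : a ∈ F.args) (hb : b ∈ F.args) (hab : F.claim a = F.claim b)
    (h : (a, b) ∈ F.att) : (b, b) ∈ F.att ∨ (b, a) ∈ F.att := by
  obtain ⟨G, rfl⟩ := hF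
  by_cases habG : (a, b) ∈ G.att
  · have hbbG := (G.isWf a ha b hb hab b).mp habG
    exact .inl (mem_redAtt_of_not_pref (by omega) hbbG (G.not_pref_self b))
  · exact .inr (swap_mem_redAtt_of_not_mem_att hj h habG)

theorem self_attack_of_mutual_attack_of_mem_imageI (hj : j = 1 ∨ j = 2 ∨ j = 3)
    (hF : F ∈ ImageI j) (ha : a ∈ F.args) (hb : b ∈ F.args) (hab : F.claim a = F.claim b)
    (h : (a, b) ∈ F.att) (h' : (b, a) ∈ F.att) : (b, b) ∈ F.att := by
  obtain ⟨G, rfl⟩ := hF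
  have hbbG := (G.isWf a ha b hb hab b).mp (mem_att_of_mem_redAtt_of_swap hj h h')
  exact mem_redAtt_of_not_pref (by omega) hbbG (G.not_pref_self b)

theorem attack_of_triangle_of_mem_imageTransI {c : ℕ} (hj : j = 1 ∨ j = 2 ∨ j = 4)
    (hF : F ∈ ImageTransI j) (ha : a ∈ F.args) (hb : b ∈ F.args)
    (hab : F.claim a = F.claim b) (haa : (a, a) ∈ F.att) (hbc : (b, c) ∈ F.att)
    (hca : (c, a) ∈ F.att) : (b, a) ∈ F.att ∨ (a, c) ∈ F.att ∨ (c, b) ∈ F.att := by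
  obtain ⟨G, htrans, rfl⟩ := hF
  have hj' : j = 1 ∨ j = 2 ∨ j = 3 ∨ j = 4 := by omega
  by_contra! ⟨hba, hac, hcb⟩
  have hwf := G.isWf a ha b hb hab
  have haaG : (a, a) ∈ G.att := by
    rcases mem_att_or_reversed_of_mem_redAtt haa with h | ⟨h, -⟩ <;> exact h
  have hab_pref : G.pref a b := by
    by_contra h
    exact hba (mem_redAtt_of_not_pref hj' ((hwf a).mp haaG) h)
  rcases mem_att_or_reversed_of_mem_redAtt hbc with hbcG | ⟨-, hbc_pref⟩
  · have hca_pref : G.pref c a := by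
      by_contra h
      exact hac (mem_redAtt_of_not_pref hj' ((hwf c).mpr hbcG) h)
    exact hcb (swap_mem_redAtt_of_pref hj (htrans hca_pref hab_pref) hbc)
  · have hac_pref : G.pref a c := htrans hab_pref hbc_pref
    exact hac (swap_mem_redAtt_of_pref hj hac_pref hca)

end Images

def twoArgPCAF : PCAF where
  args := {1, 2}
  att := {(1, 1), (2, 1)}
  claim _ := 0
  att_dom := by simp
  pref a b := a = 1 ∧ b = 2
  pref_dom := by rintro a b ⟨rfl, rfl⟩; decide
  pref_asymm := by rintro a b ⟨rfl, rfl⟩ ⟨h, -⟩; omega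
  isWf := by simp [CAF.wf]

def threeArgPCAF : PCAF where
  args := {1, 2, 3}
  att := {(1, 1), (1, 2), (1, 3), (2, 1), (2, 2), (2, 3), (3, 1)}
  claim a := if a = 3 then 1 else 0
  att_dom := by simp
  pref a b := (a = 1 ∧ b = 2) ∨ (a = 3 ∧ b = 1) ∨ (a = 3 ∧ b = 2)
  pref_dom := by rintro a b (⟨rfl, rfl⟩ | ⟨rfl, rfl⟩ | ⟨rfl, rfl⟩) <;> decide
  pref_asymm := by omega
  isWf := by simp [CAF.wf]

theorem twoArgPCAF_pref_transitive : Transitive twoArgPCAF.pref := by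
  intro a b c; simp only [twoArgPCAF]; omega

theorem threeArgPCAF_pref_transitive : Transitive threeArgPCAF.pref := by
  intro a b c; simp only [threeArgPCAF]; omega

theorem red_one_twoArgPCAF_att : (Red 1 twoArgPCAF).att = {(1, 1)} := by
  ext ⟨a, b⟩; simp [Red, mem_redAtt_one, twoArgPCAF]; omega

theorem red_two_twoArgPCAF_att : (Red 2 twoArgPCAF).att = {(1, 1), (1, 2)} := by
  ext ⟨a, b⟩; simp [Red, mem_redAtt_two, twoArgPCAF]; omega

theorem red_four_twoArgPCAF_att : (Red 4 twoArgPCAF).att = {(1, 1), (1, 2), (2, 1)} := by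
  ext ⟨a, b⟩; simp [Red, mem_redAtt_four, twoArgPCAF]; omega

theorem red_three_threeArgPCAF_att :
    (Red 3 threeArgPCAF).att = {(1, 1), (1, 2), (2, 2), (2, 3), (3, 1)} := by
  ext ⟨a, b⟩
  simp only [Red, mem_redAtt_three, threeArgPCAF, Set.mem_insert_iff, Set.mem_singleton_iff,
    Prod.mk.injEq]
  constructor
  · rintro (⟨h, hn⟩ | ⟨h, hn⟩) <;>
      rcases h with ⟨rfl, rfl⟩ | ⟨rfl, rfl⟩ | ⟨rfl, rfl⟩ | ⟨rfl, rfl⟩ | ⟨rfl, rfl⟩ | ⟨rfl, rfl⟩ |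
        ⟨rfl, rfl⟩ <;> simp at hn ⊢
  · rintro (⟨rfl, rfl⟩ | ⟨rfl, rfl⟩ | ⟨rfl, rfl⟩ | ⟨rfl, rfl⟩ | ⟨rfl, rfl⟩) <;> simp

section Separation

variable {j : ℕ}

theorem red_one_twoArgPCAF_notMem_imageI (hj : j = 2 ∨ j = 3 ∨ j = 4) :
    Red 1 twoArgPCAF ∉ ImageI j := fun hF => by
  have := attack_between_of_self_attack_of_mem_imageI (a := 1) (b := 2) hj hF
    (by simp [Red, twoArgPCAF]) (by simp [Red, twoArgPCAF]) rfl
    (by simp [red_one_twoArgPCAF_att])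
  simp [red_one_twoArgPCAF_att] at this

theorem red_two_twoArgPCAF_notMem_imageI (hj : j = 1 ∨ j = 3 ∨ j = 4) :
    Red 2 twoArgPCAF ∉ ImageI j := fun hF => by
  have := self_attack_or_swap_of_attack_of_mem_imageI (a := 1) (b := 2) hj hF
    (by simp [Red, twoArgPCAF]) (by simp [Red, twoArgPCAF]) rfl
    (by simp [red_two_twoArgPCAF_att])
  simp [red_two_twoArgPCAF_att] at this

theorem red_four_twoArgPCAF_notMem_imageI (hj : j = 1 ∨ j = 2 ∨ j = 3) :
    Red 4 twoArgPCAF ∉ ImageI j := fun hF => by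
  have := self_attack_of_mutual_attack_of_mem_imageI (a := 1) (b := 2) hj hF
    (by simp [Red, twoArgPCAF]) (by simp [Red, twoArgPCAF]) rfl
    (by simp [red_four_twoArgPCAF_att]) (by simp [red_four_twoArgPCAF_att])
  simp [red_four_twoArgPCAF_att] at this

theorem red_three_threeArgPCAF_notMem_imageTransI (hj : j = 1 ∨ j = 2 ∨ j = 4) :
    Red 3 threeArgPCAF ∉ ImageTransI j := fun hF => by
  have := attack_of_triangle_of_mem_imageTransI (a := 1) (b := 2) (c := 3) hj hF
    (by simp [Red, threeArgPCAF]) (by simp [Red, threeArgPCAF]) rfl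
    (by simp [red_three_threeArgPCAF_att]) (by simp [red_three_threeArgPCAF_att])
    (by simp [red_three_threeArgPCAF_att])
  simp [red_three_threeArgPCAF_att] at this

end Separation

/-- For all `i, j ∈ {1,2,3,4}` with `i ≠ j`, the class `ImageTrans_i`
is not a subclass of `ImageTrans_j`. -/
theorem stmt_7 :
    ∀ i ∈ ({1, 2, 3, 4} : Set ℕ), ∀ j ∈ ({1, 2, 3, 4} : Set ℕ), i ≠ j →
      ¬ ImageTransI i ⊆ ImageTransI j := by
  intro i hi j hj hij hsub
  simp only [Set.mem_insert_iff, Set.mem_singleton_iff] at hi hj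
  have hTwo : ∀ k, Red k twoArgPCAF ∈ ImageTransI k :=
    fun _ => ⟨twoArgPCAF, twoArgPCAF_pref_transitive, rfl⟩
  rcases hi with rfl | rfl | rfl | rfl
  · exact red_one_twoArgPCAF_notMem_imageI (by omega)
      (imageTransI_subset_imageI j (hsub (hTwo 1)))
  · exact red_two_twoArgPCAF_notMem_imageI (by omega)
      (imageTransI_subset_imageI j (hsub (hTwo 2)))
  · exact red_three_threeArgPCAF_notMem_imageTransI (by omega)
      (hsub ⟨threeArgPCAF, threeArgPCAF_pref_transitive, rfl⟩)
  · exact red_four_twoArgPCAF_notMem_imageI (by omega)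
      (imageTransI_subset_imageI j (hsub (hTwo 4)))
end

section
/- A CAF F belongs to ImageTrans_1 (i.e. F = Red_1(F') for some PCAF F' with transitive preferences) if and only if (1) the directed graph wfp(F) is acyclic, and (2) whenever (a,b) is an attack of F there is no directed path from a to b in wfp(F). -/
/-!
If `F = Red_1(G)` with `≻` transitive, every edge `(a, b)` of `wfp(F)` is an attack of `G`
(by well-formedness of `G`) deleted by the reduction, so `b ≻ a`; along a path of `wfp(F)`
transitivity gives `b ≻ a` for its endpoints, which rules out cycles (asymmetry) and paths
underneath surviving attacks. Conversely, add all `wfp(F)` edges as attacks, which makes the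
framework well-formed, and let `b ≻ a` iff `wfp(F)` has a path from `a` to `b`: the two
conditions say exactly that this preference is asymmetric and deletes precisely the added edges.
-/

namespace CAF

lemma ext_of {F G : CAF} (h_args : F.args = G.args) (h_att : F.att = G.att)
    (h_claim : F.claim = G.claim) : F = G := by
  cases F; cases G; simp_all

def WfpAdj (F : CAF) (x y : ℕ) : Prop := (x, y) ∈ F.wfp

lemma WfpAdj.mem_args {F : CAF} {x y : ℕ} (h : F.WfpAdj x y) : x ∈ F.args ∧ y ∈ F.args :=
  ⟨h.1, h.2.1⟩

lemma transGen_wfpAdj_mem_args {F : CAF} {x y : ℕ} (h : Relation.TransGen F.WfpAdj x y) :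
    x ∈ F.args ∧ y ∈ F.args := by
  induction h with
  | single h => exact h.mem_args
  | tail _ h ih => exact ⟨ih.1, h.mem_args.2⟩

def wfCompletion (F : CAF) : CAF where
  args := F.args
  att := F.att ∪ F.wfp
  claim := F.claim
  att_dom := by
    rintro p (hp | hp)
    · exact F.att_dom p hp
    · exact ⟨hp.1, hp.2.1⟩

lemma exists_same_claim_att_of_mem_wfCompletion {F : CAF} {a c : ℕ} (ha : a ∈ F.args)
    (h : (a, c) ∈ F.wfCompletion.att) :
    ∃ a' ∈ F.args, F.claim a' = F.claim a ∧ (a', c) ∈ F.att := by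
  rcases h with h | ⟨-, -, -, h⟩
  · exact ⟨a, ha, rfl, h⟩
  · exact h

lemma wfCompletion_wf (F : CAF) : F.wfCompletion.wf := by
  have h_imp : ∀ a ∈ F.args, ∀ b ∈ F.args, F.claim a = F.claim b →
      ∀ c, (a, c) ∈ F.wfCompletion.att → (b, c) ∈ F.wfCompletion.att := by
    intro a ha b hb hab c hac
    obtain ⟨a', ha', ha'a, ha'c⟩ := exists_same_claim_att_of_mem_wfCompletion ha hac
    by_cases hbc : (b, c) ∈ F.att
    · exact Or.inl hbc
    · exact Or.inr ⟨hb, (F.att_dom _ ha'c).2, hbc, a', ha', ha'a.trans hab, ha'c⟩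
  exact fun a ha b hb hab c => ⟨h_imp a ha b hb hab c, h_imp b hb a ha hab.symm c⟩

def pathPCAF (F : CAF) (h_acyclic : ∀ a, ¬ Relation.TransGen F.WfpAdj a a) : PCAF where
  toCAF := F.wfCompletion
  pref x y := Relation.TransGen F.WfpAdj y x
  pref_dom _ _ h := (transGen_wfpAdj_mem_args h).symm
  pref_asymm a _ hab hba := h_acyclic a (hba.trans hab)
  isWf := F.wfCompletion_wf

lemma pathPCAF_pref_transitive (F : CAF) (h_acyclic : ∀ a, ¬ Relation.TransGen F.WfpAdj a a) :
    Transitive (F.pathPCAF h_acyclic).pref :=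
  fun _ _ _ hab hbc => hbc.trans hab

end CAF

lemma mem_red_one_att_iff (G : PCAF) (p : ℕ × ℕ) :
    p ∈ (Red 1 G).att ↔ p ∈ G.att ∧ ¬ G.pref p.2 p.1 := by
  simp [Red, redAtt]

lemma red_one_pathPCAF (F : CAF) (h_acyclic : ∀ a, ¬ Relation.TransGen F.WfpAdj a a)
    (h_att : ∀ a b, (a, b) ∈ F.att → ¬ Relation.TransGen F.WfpAdj a b) :
    Red 1 (F.pathPCAF h_acyclic) = F := by
  refine CAF.ext_of rfl (Set.ext fun p => ?_) rfl
  rw [mem_red_one_att_iff]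
  constructor
  · rintro ⟨hp | hp, h_not_pref⟩
    · exact hp
    · exact (h_not_pref (.single hp)).elim
  · exact fun hp => ⟨Or.inl hp, h_att p.1 p.2 hp⟩

lemma PCAF.pref_of_wfpAdj_red_one (G : PCAF) {x y : ℕ} (h : (Red 1 G).WfpAdj x y) :
    G.pref y x := by
  obtain ⟨hx, -, h_not_att, a', ha', ha'x, ha'y⟩ := h
  rw [mem_red_one_att_iff] at h_not_att ha'y
  have hxy : (x, y) ∈ G.att := (G.isWf a' ha' x hx ha'x y).mp ha'y.1
  by_contra h_not_pref
  exact h_not_att ⟨hxy, h_not_pref⟩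

lemma PCAF.pref_of_transGen_wfpAdj_red_one (G : PCAF) (h_trans : Transitive G.pref) {x y : ℕ}
    (h : Relation.TransGen (Red 1 G).WfpAdj x y) : G.pref y x := by
  induction h with
  | single h => exact G.pref_of_wfpAdj_red_one h
  | tail _ h ih => exact h_trans (G.pref_of_wfpAdj_red_one h) ih

/-- Characterization of `ImageTrans_1`: a CAF `F` belongs to `ImageTrans_1` iff
(1) the directed graph `wfp(F)` is acyclic (no vertex has a directed path of
positive length back to itself), and (2) whenever `(a,b)` is an attack of `F`
there is no directed path from `a` to `b` in `wfp(F)`. -/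
theorem stmt_8 (F : CAF) :
    F ∈ ImageTransI 1 ↔
      ((∀ a : ℕ, ¬ Relation.TransGen (fun x y => (x, y) ∈ F.wfp) a a) ∧
       (∀ a b : ℕ, (a, b) ∈ F.att →
          ¬ Relation.TransGen (fun x y => (x, y) ∈ F.wfp) a b)) := by
  constructor
  · rintro ⟨G, h_trans, rfl⟩
    have h_pref : ∀ {x y}, Relation.TransGen (Red 1 G).WfpAdj x y → G.pref y x :=
      G.pref_of_transGen_wfpAdj_red_one h_trans
    refine ⟨fun a h => G.pref_asymm a a (h_pref h) (h_pref h), fun a b hab h => ?_⟩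
    exact ((mem_red_one_att_iff G _).mp hab).2 (h_pref h)
  · rintro ⟨h_acyclic, h_att⟩
    exact ⟨F.pathPCAF h_acyclic, F.pathPCAF_pref_transitive h_acyclic,
      red_one_pathPCAF F h_acyclic h_att⟩
end
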